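/- Let (Ω, μ) be a measure space with 0 < μ(Ω) < ∞, let σ ∈ (1, 2), set q = 2/(3−σ), and let u_* > 0. Then there exists a constant K > 0, depending only on σ and μ(Ω), such that for every measurable function u : Ω → [0, ∞) with ∫_Ω u dμ ≤ 2u_*·μ(Ω), one has (∫_Ω |u − u_*|^q dμ)^{2/q} ≤ K·u_*^{2−σ}·∫_Ω (u^{σ−1} − u_*^{σ−1})·(u − u_*) dμ, where both sides are interpreted in the extended nonnegative reals (the integrand on the right-hand side is nonnegative since s ↦ s^{σ−1} is increasing). -/

import Mathlib

open MeasureTheory Set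
open scoped ENNReal

/-!
Hölder's inequality with exponents `p = 3 - σ` and `p / (p - 1)`, applied to the splitting
`|u - u_*| ^ q = (|u - u_*| ^ 2 * w ^ (σ - 2)) ^ (1 / p) * w ^ ((2 - σ) / p)` with the weight
`w = u + u_*`, gives
`(∫ |u - u_*| ^ q) ^ p ≤ (∫ |u - u_*| ^ 2 * w ^ (σ - 2)) * (∫ w) ^ (2 - σ)`.
Concavity of `s ↦ s ^ (σ - 1)` gives the pointwise bound
`(σ - 1) * |s - t| ^ 2 * (s + t) ^ (σ - 2) ≤ (s ^ (σ - 1) - t ^ (σ - 1)) * (s - t)`,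
and the mass constraint gives `∫ w ≤ 3 u_* μ(Ω)`.
-/

theorem Real.mul_rpow_sub_one_mul_sub_le_rpow_sub_rpow {p a b : ℝ} (hp₀ : 0 ≤ p)
    (hp₁ : p ≤ 1) (ha : 0 < a) (hb : 0 ≤ b) : p * a ^ (p - 1) * (a - b) ≤ a ^ p - b ^ p := by
  have hbern := rpow_one_add_le_one_add_mul_self
    (show -1 ≤ b / a - 1 by linarith [div_nonneg hb ha.le]) hp₀ hp₁
  rw [add_sub_cancel, Real.div_rpow hb ha.le, div_le_iff₀ (by positivity)] at hbern
  have ha_pow : a ^ p = a ^ (p - 1) * a := by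
    rw [← Real.rpow_add_one ha.ne', sub_add_cancel]
  have hexpand : (1 + p * (b / a - 1)) * a ^ p = a ^ p - p * a ^ (p - 1) * (a - b) := by
    rw [ha_pow]; field_simp; ring
  linarith

theorem Real.mul_sub_sq_mul_add_rpow_le_rpow_sub_rpow_mul_sub {p s t : ℝ} (hp₀ : 0 ≤ p)
    (hp₁ : p ≤ 1) (hs : 0 ≤ s) (ht : 0 ≤ t) :
    p * ((s - t) ^ 2 * (s + t) ^ (p - 1)) ≤ (s ^ p - t ^ p) * (s - t) := by
  wlog hts : t ≤ s generalizing s t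
  · have := this ht hs (le_of_not_ge hts)
    rw [add_comm]; linarith
  rcases hs.eq_or_lt with rfl | hs
  · obtain rfl : t = 0 := le_antisymm hts ht
    simp
  have htangent := mul_rpow_sub_one_mul_sub_le_rpow_sub_rpow hp₀ hp₁ hs ht
  have hmono : (s + t) ^ (p - 1) ≤ s ^ (p - 1) :=
    Real.rpow_le_rpow_of_nonpos hs (by linarith) (by linarith)
  have hst : 0 ≤ s - t := by linarith
  calc p * ((s - t) ^ 2 * (s + t) ^ (p - 1)) ≤ p * ((s - t) ^ 2 * s ^ (p - 1)) := by gcongr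
    _ = (p * s ^ (p - 1) * (s - t)) * (s - t) := by ring
    _ ≤ (s ^ p - t ^ p) * (s - t) := by gcongr

theorem ENNReal.lintegral_rpow_le_lintegral_weighted_mul_lintegral_weight_rpow {Ω : Type*}
    [MeasurableSpace Ω] {μ : Measure Ω} {p : ℝ} (hp : 1 < p) {f w : Ω → ℝ≥0∞}
    (hf : AEMeasurable f μ) (hw : AEMeasurable w μ) (hw₀ : ∀ x, w x ≠ 0)
    (hw_top : ∀ x, w x ≠ ∞) :
    (∫⁻ x, f x ∂μ) ^ p ≤ (∫⁻ x, f x ^ p * w x ^ (1 - p) ∂μ) * (∫⁻ x, w x ∂μ) ^ (p - 1) := by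
  set r := p.conjExponent
  have hpr : p.HolderConjugate r := .conjExponent hp
  have hp₀ : 0 < p := by linarith
  have hexp : (1 - p) * (1 / p) + 1 / r = 0 := by
    rw [one_sub_mul, mul_one_div_cancel hp₀.ne', one_div, one_div, hpr.inv_sub_one]; ring
  have hsplit : ∀ x, f x = (f x ^ p * w x ^ (1 - p)) ^ (1 / p) * w x ^ (1 / r) := fun x => by
    rw [ENNReal.mul_rpow_of_nonneg _ _ (by positivity), ← ENNReal.rpow_mul, ← ENNReal.rpow_mul,
      mul_one_div_cancel hp₀.ne', ENNReal.rpow_one, mul_assoc,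
      ← ENNReal.rpow_add _ _ (hw₀ x) (hw_top x), hexp, ENNReal.rpow_zero, mul_one]
  have hholder := ENNReal.lintegral_mul_le_Lp_mul_Lq μ hpr
    (((hf.pow_const p).mul (hw.pow_const (1 - p))).pow_const (1 / p)) (hw.pow_const (1 / r))
  simp only [Pi.mul_apply, ← hsplit, ← ENNReal.rpow_mul, one_div_mul_cancel hp₀.ne',
    one_div_mul_cancel hpr.symm.ne_zero, ENNReal.rpow_one] at hholder
  calc (∫⁻ x, f x ∂μ) ^ p
      ≤ ((∫⁻ x, f x ^ p * w x ^ (1 - p) ∂μ) ^ (1 / p) * (∫⁻ x, w x ∂μ) ^ (1 / r)) ^ p := by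
        gcongr
    _ = (∫⁻ x, f x ^ p * w x ^ (1 - p) ∂μ) * (∫⁻ x, w x ∂μ) ^ (p - 1) := by
      rw [ENNReal.mul_rpow_of_nonneg _ _ hp₀.le, ← ENNReal.rpow_mul, ← ENNReal.rpow_mul,
        one_div_mul_cancel hp₀.ne', ENNReal.rpow_one, one_div_mul_eq_div,
        hpr.div_conj_eq_sub_one]

theorem lintegral_ofReal_add_const_le {Ω : Type*} [MeasurableSpace Ω] (μ : Measure Ω)
    (u : Ω → ℝ) (c : ℝ) :
    ∫⁻ x, ENNReal.ofReal (u x + c) ∂μ ≤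
      ∫⁻ x, ENNReal.ofReal (u x) ∂μ + ENNReal.ofReal c * μ univ :=
  calc ∫⁻ x, ENNReal.ofReal (u x + c) ∂μ
      ≤ ∫⁻ x, ENNReal.ofReal (u x) + ENNReal.ofReal c ∂μ :=
        lintegral_mono fun _ => ENNReal.ofReal_add_le
    _ = ∫⁻ x, ENNReal.ofReal (u x) ∂μ + ENNReal.ofReal c * μ univ := by
      rw [lintegral_add_right _ measurable_const, lintegral_const]

theorem ofReal_abs_sub_rpow_rpow_mul_ofReal_add_rpow_le {σ q s t : ℝ} (hσ₁ : 1 < σ)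
    (hσ₂ : σ ≤ 2) (hq : q = 2 / (3 - σ)) (hs : 0 ≤ s) (ht : 0 < t) :
    ENNReal.ofReal (|s - t| ^ q) ^ (3 - σ) * ENNReal.ofReal (s + t) ^ (1 - (3 - σ)) ≤
      ENNReal.ofReal (σ - 1)⁻¹ * ENNReal.ofReal ((s ^ (σ - 1) - t ^ (σ - 1)) * (s - t)) := by
  have hqp : q * (3 - σ) = 2 := by rw [hq]; field_simp [show 3 - σ ≠ 0 by linarith]
  rw [ENNReal.ofReal_rpow_of_nonneg (by positivity) (by linarith),
    ← Real.rpow_mul (abs_nonneg _), hqp, Real.rpow_two, sq_abs,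
    ENNReal.ofReal_rpow_of_pos (by positivity), ← ENNReal.ofReal_mul (by positivity),
    ← ENNReal.ofReal_mul (inv_nonneg.2 (by linarith))]
  refine ENNReal.ofReal_le_ofReal ((le_inv_mul_iff₀ (by linarith)).2 ?_)
  rw [show 1 - (3 - σ) = σ - 1 - 1 by ring]
  exact Real.mul_sub_sq_mul_add_rpow_le_rpow_sub_rpow_mul_sub (by linarith) (by linarith) hs ht.le

/-- Lemma 4.2 for `1 < σ < 2` (inequality (1-15)): with `q = 2/(3−σ)` there is a
constant `K > 0`, depending only on `σ` and `μ(Ω)`, such that for every nonnegative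
measurable `u` with `∫ u ≤ 2 u_* μ(Ω)`,
`‖u − u_*‖_{L^q}² ≤ K u_*^{2−σ} ∫ (u^{σ−1} − u_*^{σ−1})(u − u_*)`. -/
theorem lower_bound_by_logistic_dissipation_lt_two
    {Ω : Type*} [MeasurableSpace Ω] (μ : Measure Ω)
    (hμ_pos : 0 < μ univ) (hμ_fin : μ univ < ⊤)
    (σ q : ℝ) (hσ₁ : 1 < σ) (hσ₂ : σ < 2) (hq : q = 2 / (3 - σ)) :
    ∃ K : ℝ, 0 < K ∧
      ∀ u_star : ℝ, 0 < u_star →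
        ∀ u : Ω → ℝ, Measurable u → (∀ x, 0 ≤ u x) →
          (∫⁻ x, ENNReal.ofReal (u x) ∂μ) ≤ ENNReal.ofReal (2 * u_star) * μ univ →
          (∫⁻ x, ENNReal.ofReal (|u x - u_star| ^ q) ∂μ) ^ (2 / q) ≤
            ENNReal.ofReal (K * u_star ^ (2 - σ)) *
              ∫⁻ x, ENNReal.ofReal ((u x ^ (σ - 1) - u_star ^ (σ - 1)) * (u x - u_star)) ∂μ := by
  have hM : 0 < (μ univ).toReal := ENNReal.toReal_pos hμ_pos.ne' hμ_fin.ne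
  refine ⟨(σ - 1)⁻¹ * (3 * (μ univ).toReal) ^ (2 - σ), by have := sub_pos.2 hσ₁; positivity, ?_⟩
  intro u_star hu_star u hu hu₀ hmass
  have h2q : 2 / q = 3 - σ := by rw [hq, div_div_cancel₀ two_ne_zero]
  have hweight : ∫⁻ x, ENNReal.ofReal (u x + u_star) ∂μ ≤ ENNReal.ofReal (3 * u_star) * μ univ :=
    calc _ ≤ ENNReal.ofReal (2 * u_star) * μ univ + ENNReal.ofReal u_star * μ univ :=
          (lintegral_ofReal_add_const_le μ u u_star).trans (by gcongr)
      _ = ENNReal.ofReal (3 * u_star) * μ univ := by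
        rw [← add_mul, ← ENNReal.ofReal_add (by positivity) hu_star.le]
        congr 2; ring
  have hconst : ENNReal.ofReal (σ - 1)⁻¹ * (ENNReal.ofReal (3 * u_star) * μ univ) ^ (2 - σ) =
      ENNReal.ofReal ((σ - 1)⁻¹ * (3 * (μ univ).toReal) ^ (2 - σ) * u_star ^ (2 - σ)) := by
    conv_lhs => rw [← ENNReal.ofReal_toReal hμ_fin.ne]
    rw [← ENNReal.ofReal_mul (by positivity), ENNReal.ofReal_rpow_of_pos (by positivity),
      ← ENNReal.ofReal_mul (inv_nonneg.2 (by linarith)), mul_assoc ((σ - 1)⁻¹),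
      ← Real.mul_rpow (by positivity) hu_star.le]
    ring_nf
  rw [h2q]
  calc (∫⁻ x, ENNReal.ofReal (|u x - u_star| ^ q) ∂μ) ^ (3 - σ)
      ≤ (∫⁻ x, ENNReal.ofReal (|u x - u_star| ^ q) ^ (3 - σ) *
            ENNReal.ofReal (u x + u_star) ^ (1 - (3 - σ)) ∂μ) *
          (∫⁻ x, ENNReal.ofReal (u x + u_star) ∂μ) ^ (3 - σ - 1) :=
        ENNReal.lintegral_rpow_le_lintegral_weighted_mul_lintegral_weight_rpow (by linarith)
          (by fun_prop) (by fun_prop) (fun x => (ENNReal.ofReal_pos.2 (by linarith [hu₀ x])).ne')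
          (fun _ => ENNReal.ofReal_ne_top)
    _ ≤ (ENNReal.ofReal (σ - 1)⁻¹ *
            ∫⁻ x, ENNReal.ofReal ((u x ^ (σ - 1) - u_star ^ (σ - 1)) * (u x - u_star)) ∂μ) *
          (ENNReal.ofReal (3 * u_star) * μ univ) ^ (2 - σ) := by
      rw [← lintegral_const_mul' _ _ ENNReal.ofReal_ne_top, show 3 - σ - 1 = 2 - σ by ring]
      refine mul_le_mul' (lintegral_mono fun x => ?_) (by gcongr)
      exact ofReal_abs_sub_rpow_rpow_mul_ofReal_add_rpow_le hσ₁ hσ₂.le hq (hu₀ x) hu_star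
    _ = _ := by rw [mul_comm, ← mul_assoc, mul_comm _ (ENNReal.ofReal _), hconst]
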